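/- arXiv:1911.01868 — 3 statements merged into one kernel-verified Lean document; each statement's English description precedes it below -/
import Mathlib

section
/- For positive semidefinite matrices U and W with W positive definite, tr(U W^{-1}) ≥ 0, and if D_KL := tr(U W^{-1}) − (1/2) log det(I + U W^{-1}), then (1/2) tr(U W^{-1}) ≤ D_KL ≤ tr(U W^{-1}) − (1/2) log(1 + tr(U W^{-1})). -/
/-!
Factor `W⁻¹ = Cᴴ C`. By cyclicity of the trace and the Weinstein–Aronszajn identity, `U W⁻¹`
has the same trace and the same `det (1 + ·)` as the positive semidefinite matrix `C U Cᴴ`.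
For a positive semidefinite `N` with eigenvalues `μᵢ ≥ 0` we have `tr N = ∑ μᵢ` and
`log det (1 + N) = ∑ log (1 + μᵢ)`, so `log (1 + μ) ≤ μ` gives the lower bound and
`1 + ∑ μᵢ ≤ ∏ (1 + μᵢ)` the upper bound.
-/

open Matrix Finset
open scoped ComplexOrder

theorem Finset.one_add_sum_le_prod_one_add {ι R : Type*} [CommSemiring R] [PartialOrder R]
    [IsOrderedRing R] (s : Finset ι) {f : ι → R} (hf : ∀ i ∈ s, 0 ≤ f i) :
    1 + ∑ i ∈ s, f i ≤ ∏ i ∈ s, (1 + f i) := by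
  classical
  induction s using Finset.induction_on with
  | empty => simp
  | insert a s ha ih =>
    rw [sum_insert ha, prod_insert ha]
    have hfa : 0 ≤ f a := hf a (mem_insert_self a s)
    have hfs : ∀ i ∈ s, 0 ≤ f i := fun i hi ↦ hf i (mem_insert_of_mem hi)
    calc 1 + (f a + ∑ i ∈ s, f i)
        ≤ 1 + (f a + ∑ i ∈ s, f i) + f a * ∑ i ∈ s, f i :=
          le_add_of_nonneg_right (mul_nonneg hfa (sum_nonneg hfs))
      _ = (1 + f a) * (1 + ∑ i ∈ s, f i) := by ring
      _ ≤ (1 + f a) * ∏ i ∈ s, (1 + f i) := by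
          gcongr
          · exact add_nonneg zero_le_one hfa
          · exact ih hfs

namespace Matrix

variable {n 𝕜 : Type*} [Fintype n] [DecidableEq n] [RCLike 𝕜]

theorem IsHermitian.det_one_add {A : Matrix n n 𝕜} (hA : A.IsHermitian) :
    (1 + A).det = ∏ i, (1 + (hA.eigenvalues i : 𝕜)) := by
  conv_lhs =>
    rw [hA.spectral_theorem, ← map_one (Unitary.conjStarAlgAut 𝕜 _ hA.eigenvectorUnitary),
      ← map_add, Unitary.conjStarAlgAut_apply, det_mul_right_comm,
      Unitary.mul_star_self_of_mem hA.eigenvectorUnitary.2, one_mul, ← diagonal_one,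
      diagonal_add, det_diagonal]
  rfl

open scoped MatrixOrder in
theorem PosSemidef.exists_posSemidef_trace_eq_det_one_add_eq {A B : Matrix n n 𝕜}
    (hA : A.PosSemidef) (hB : B.PosSemidef) :
    ∃ N : Matrix n n 𝕜, N.PosSemidef ∧ (A * B).trace = N.trace ∧
      (1 + A * B).det = (1 + N).det := by
  obtain ⟨C, rfl⟩ := CStarAlgebra.nonneg_iff_eq_star_mul_self.mp hB.nonneg
  refine ⟨C * A * Cᴴ, hA.mul_mul_conjTranspose_same C, ?_, ?_⟩
  · rw [star_eq_conjTranspose, ← mul_assoc, trace_mul_comm, mul_assoc]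
  · rw [star_eq_conjTranspose, ← mul_assoc, det_one_add_mul_comm, mul_assoc]

variable {A : Matrix n n ℝ}

theorem PosSemidef.log_det_one_add_le_trace (hA : A.PosSemidef) :
    Real.log (1 + A).det ≤ A.trace := by
  have hμ := hA.eigenvalues_nonneg
  rw [hA.isHermitian.det_one_add, hA.isHermitian.trace_eq_sum_eigenvalues]
  simp only [RCLike.ofReal_real_eq_id, id_eq]
  rw [Real.log_prod fun i _ ↦ by linarith [hμ i]]
  refine sum_le_sum fun i _ ↦ ?_
  linarith [Real.log_le_sub_one_of_pos (x := 1 + hA.1.eigenvalues i) (by linarith [hμ i])]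

theorem PosSemidef.log_one_add_trace_le_log_det_one_add (hA : A.PosSemidef) :
    Real.log (1 + A.trace) ≤ Real.log (1 + A).det := by
  have hμ := hA.eigenvalues_nonneg
  rw [hA.isHermitian.det_one_add, hA.isHermitian.trace_eq_sum_eigenvalues]
  simp only [RCLike.ofReal_real_eq_id, id_eq]
  exact Real.log_le_log (by linarith [sum_nonneg fun i (_ : i ∈ univ) ↦ hμ i])
    (one_add_sum_le_prod_one_add _ fun i _ ↦ hμ i)

end Matrix

/-- For `U ⪰ 0` and `W ≻ 0`: `tr (U W⁻¹) ≥ 0`, and the expected KL divergence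
`D = tr (U W⁻¹) − (1/2) log det (I + U W⁻¹)` satisfies
`(1/2) tr (U W⁻¹) ≤ D ≤ tr (U W⁻¹) − (1/2) log (1 + tr (U W⁻¹))`. -/
theorem kl_divergence_trace_bounds
    {m : ℕ} (U W : Matrix (Fin m) (Fin m) ℝ)
    (hU : U.PosSemidef) (hW : W.PosDef)
    (D : ℝ) (hD : D = (U * W⁻¹).trace - (1 / 2) * Real.log ((1 + U * W⁻¹).det)) :
    0 ≤ (U * W⁻¹).trace ∧
    (1 / 2) * (U * W⁻¹).trace ≤ D ∧
    D ≤ (U * W⁻¹).trace - (1 / 2) * Real.log (1 + (U * W⁻¹).trace) := by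
  obtain ⟨N, hN, htrace, hdet⟩ :=
    hU.exists_posSemidef_trace_eq_det_one_add_eq hW.inv.posSemidef
  have hlog_det_le := hN.log_det_one_add_le_trace
  have hlog_trace_le := hN.log_one_add_trace_le_log_det_one_add
  rw [hD, htrace, hdet]
  exact ⟨hN.trace_nonneg, by linarith, by linarith⟩
end

section
/- Let |ρ| < 1 and define s_k recursively by s_k = ρ s_{k-1} + x_k with s_{-1} = 0. If for every ε > 0, x_k / k^{α+ε} → 0 almost surely, then for every ε > 0, s_k / k^{α+ε} → 0 almost surely. -/
open MeasureTheory Filter Topology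

/-! Normalise by `w k = k ^ (α + ε)`. Since `w k / w (k + 1) → 1`, the normalised
sequence `a k = |s k / w k|` eventually satisfies `a (k + 1) ≤ r * a k + b (k + 1)` for a
fixed `r ∈ (|ρ|, 1)`, where `b k = |x k / w k| → 0`, and such a contracting recursion with
vanishing input forces `a k → 0`. -/

lemma le_pow_mul_add_of_le_mul_add {r η : ℝ} (hr : 0 ≤ r) {a : ℕ → ℝ}
    (hrec : ∀ m, a (m + 1) ≤ r * a m + (1 - r) * η) (m : ℕ) :
    a m ≤ r ^ m * (a 0 - η) + η := by
  induction m with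
  | zero => simp
  | succ m ih =>
    calc a (m + 1) ≤ r * a m + (1 - r) * η := hrec m
      _ ≤ r * (r ^ m * (a 0 - η) + η) + (1 - r) * η := by gcongr
      _ = r ^ (m + 1) * (a 0 - η) + η := by ring

lemma tendsto_zero_of_le_mul_add {r : ℝ} (hr0 : 0 ≤ r) (hr1 : r < 1) {a b : ℕ → ℝ}
    (ha : ∀ n, 0 ≤ a n) (hb : Tendsto b atTop (𝓝 0))
    (hrec : ∀ᶠ n in atTop, a (n + 1) ≤ r * a n + b (n + 1)) :
    Tendsto a atTop (𝓝 0) := by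
  refine tendsto_order.2 ⟨fun δ hδ => .of_forall fun n => hδ.trans_le (ha n), fun δ hδ => ?_⟩
  have hη : 0 < (1 - r) * (δ / 2) := mul_pos (by linarith) (by linarith)
  have hb_small : ∀ᶠ n in atTop, b (n + 1) < (1 - r) * (δ / 2) :=
    (tendsto_add_atTop_iff_nat 1).2 hb |>.eventually_lt_const hη
  obtain ⟨M, hM⟩ := eventually_atTop.1 (hrec.and hb_small)
  have hstep (m : ℕ) : a (m + M + 1) ≤ r * a (m + M) + (1 - r) * (δ / 2) := by
    obtain ⟨hle, hsmall⟩ := hM (m + M) (Nat.le_add_left M m)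
    linarith
  have hshift (m : ℕ) : a (m + M) ≤ r ^ m * (a M - δ / 2) + δ / 2 := by
    simpa using le_pow_mul_add_of_le_mul_add (a := fun m => a (m + M)) hr0
      (fun m => by simpa only [Nat.add_right_comm m 1 M] using hstep m) m
  have hpow : Tendsto (fun m => r ^ m * (a M - δ / 2)) atTop (𝓝 0) := by
    simpa using (tendsto_pow_atTop_nhds_zero_of_lt_one hr0 hr1).mul_const (a M - δ / 2)
  rw [← map_add_atTop_eq_nat M, eventually_map]
  filter_upwards [hpow.eventually_lt_const (half_pos hδ)] with m hm
  linarith [hshift m]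

lemma ar1_div_tendsto_zero {ρ : ℝ} (hρ : |ρ| < 1) {x s w : ℕ → ℝ}
    (hsrec : ∀ k, s (k + 1) = ρ * s k + x (k + 1))
    (hw : Tendsto (fun k => w k / w (k + 1)) atTop (𝓝 1))
    (hx : Tendsto (fun k => x k / w k) atTop (𝓝 0)) :
    Tendsto (fun k => s k / w k) atTop (𝓝 0) := by
  obtain ⟨r, hρr, hr1⟩ := exists_between hρ
  have hcontract : ∀ᶠ k in atTop, |ρ| * |w k / w (k + 1)| < r := by
    have : Tendsto (fun k => |ρ| * |w k / w (k + 1)|) atTop (𝓝 |ρ|) := by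
      simpa using hw.abs.const_mul |ρ|
    exact this.eventually_lt_const hρr
  have hw_ne : ∀ᶠ k in atTop, w k / w (k + 1) ≠ 0 := hw.eventually_ne one_ne_zero
  refine tendsto_zero_iff_abs_tendsto_zero _ |>.2 <|
    tendsto_zero_of_le_mul_add ((abs_nonneg ρ).trans hρr.le) hr1
      (fun k => abs_nonneg _) ((tendsto_zero_iff_abs_tendsto_zero _).1 hx) ?_
  filter_upwards [hcontract, hw_ne] with k hk hk_ne
  obtain ⟨hwk, -⟩ := div_ne_zero_iff.1 hk_ne
  have hsplit : |ρ| * |s k| / |w (k + 1)| = |ρ| * |w k / w (k + 1)| * |s k / w k| := by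
    simp only [abs_div]
    field_simp [abs_ne_zero.2 hwk]
  calc |s (k + 1) / w (k + 1)|
      ≤ (|ρ| * |s k| + |x (k + 1)|) / |w (k + 1)| := by
        rw [hsrec, abs_div, ← abs_mul]
        gcongr
        exact abs_add_le _ _
    _ = |ρ| * |w k / w (k + 1)| * |s k / w k| + |x (k + 1) / w (k + 1)| := by
        rw [add_div, hsplit, abs_div (x (k + 1))]
    _ ≤ r * |s k / w k| + |x (k + 1) / w (k + 1)| := by gcongr

lemma tendsto_natCast_rpow_div_succ (c : ℝ) :
    Tendsto (fun k : ℕ => (k : ℝ) ^ c / ((k + 1 : ℕ) : ℝ) ^ c) atTop (𝓝 1) := by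
  have hratio : Tendsto (fun k : ℕ => ((k : ℝ) / (k + 1)) ^ c) atTop (𝓝 1) := by
    have := (Real.continuousAt_rpow_const 1 c (.inl one_ne_zero)).tendsto.comp
      (tendsto_natCast_div_add_atTop (1 : ℝ))
    rwa [Real.one_rpow] at this
  refine hratio.congr fun k => ?_
  rw [Real.div_rpow (Nat.cast_nonneg k) (by positivity), Nat.cast_succ]

theorem ar1_preserves_convergence_class_general
    {Ω : Type*} [MeasurableSpace Ω] (μ : Measure Ω)
    (ρ α : ℝ) (hρ : |ρ| < 1)
    (x s : ℕ → Ω → ℝ)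
    (hsrec : ∀ k ω, s (k + 1) ω = ρ * s k ω + x (k + 1) ω)
    (hx : ∀ ε > (0 : ℝ), ∀ᵐ ω ∂μ,
      Tendsto (fun k : ℕ => x k ω / (k : ℝ) ^ (α + ε)) atTop (nhds 0)) :
    ∀ ε > (0 : ℝ), ∀ᵐ ω ∂μ,
      Tendsto (fun k : ℕ => s k ω / (k : ℝ) ^ (α + ε)) atTop (nhds 0) := by
  intro ε hε
  filter_upwards [hx ε hε] with ω hω
  exact ar1_div_tendsto_zero hρ (fun k => hsrec k ω) (tendsto_natCast_rpow_div_succ _) hω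

/-- If `|ρ| < 1`, `s_k = ρ s_{k-1} + x_k` with `s_{-1} = 0`, and for every `ε > 0`,
`x_k / k^{α+ε} → 0` a.s., then for every `ε > 0`, `s_k / k^{α+ε} → 0` a.s. -/
theorem ar1_preserves_convergence_class
    {Ω : Type*} [MeasurableSpace Ω] (μ : Measure Ω) [IsProbabilityMeasure μ]
    (ρ α : ℝ) (hρ : |ρ| < 1)
    (x s : ℕ → Ω → ℝ)
    (hs0 : ∀ ω, s 0 ω = x 0 ω)
    (hsrec : ∀ k ω, s (k + 1) ω = ρ * s k ω + x (k + 1) ω)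
    (hx : ∀ ε > (0 : ℝ), ∀ᵐ ω ∂μ,
      Tendsto (fun k : ℕ => x k ω / (k : ℝ) ^ (α + ε)) atTop (nhds 0)) :
    ∀ ε > (0 : ℝ), ∀ᵐ ω ∂μ,
      Tendsto (fun k : ℕ => s k ω / (k : ℝ) ^ (α + ε)) atTop (nhds 0) :=
  ar1_preserves_convergence_class_general μ ρ α hρ x s hsrec hx
end

section
/- Let S_k = A S_{k-1} B + X_k with S_{-1} = 0, where A, B are fixed matrices such that B^T ⊗ A is strictly stable (spectral radius < 1). If X_k ∈ C(α) (i.e., for all ε > 0, ‖X_k‖/k^{α+ε} → 0 a.s.), then S_k ∈ C(α). -/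
/-!
Vectorizing, `s_k = vec S_k` obeys `s_{k+1} = M s_k + x_{k+1}` with `M = Bᵀ ⊗ A`. By Gelfand's
formula, spectral radius `< 1` gives `‖M ^ j‖ ≤ C ρ ^ j` with `ρ < 1`, so `‖s_k‖` is dominated by
the scalar sequence `w_{k+1} = ρ w_k + C ‖x_{k+1}‖`. Since `(k / (k + 1)) ^ γ → 1`, the rescaled
`t_k = w_k / k ^ γ` satisfies `t_{k+1} ≤ r t_k + o(1)` for some `r < 1`, which forces `t_k → 0`.
-/

open MeasureTheory Filter Matrix Topology Asymptotics
open scoped Kronecker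

theorem tendsto_zero_of_eventually_le_mul_add {t e : ℕ → ℝ} {r : ℝ} (ht : ∀ k, 0 ≤ t k)
    (hr0 : 0 ≤ r) (hr1 : r < 1) (he : Tendsto e atTop (𝓝 0))
    (hrec : ∀ᶠ k in atTop, t (k + 1) ≤ r * t k + e k) :
    Tendsto t atTop (𝓝 0) := by
  refine tendsto_order.2 ⟨fun a ha => .of_forall fun k => ha.trans_le (ht k), fun a ha => ?_⟩
  obtain ⟨K, hK⟩ := (hrec.and (he.eventually_le_const
    (show (0 : ℝ) < (1 - r) * (a / 2) by nlinarith))).exists_forall_of_atTop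
  have hgeom : ∀ j, t (K + j) ≤ r ^ j * t K + a / 2 := by
    intro j
    induction j with
    | zero => simp only [add_zero, pow_zero, one_mul]; linarith
    | succ j ih =>
      obtain ⟨hstep, hsmall⟩ := hK (K + j) (Nat.le_add_right K j)
      calc t (K + (j + 1)) ≤ r * t (K + j) + e (K + j) := hstep
        _ ≤ r * (r ^ j * t K + a / 2) + (1 - r) * (a / 2) := by gcongr
        _ = r ^ (j + 1) * t K + a / 2 := by ring
  have hdecay : Tendsto (fun j => r ^ j * t K) atTop (𝓝 0) := by
    simpa using (tendsto_pow_atTop_nhds_zero_of_lt_one hr0 hr1).mul_const (t K)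
  obtain ⟨J, hJ⟩ := (hdecay.eventually_lt_const (half_pos ha)).exists_forall_of_atTop
  refine eventually_atTop.2 ⟨K + J, fun k hk => ?_⟩
  obtain ⟨j, rfl⟩ := Nat.exists_eq_add_of_le (le_trans (Nat.le_add_right K J) hk)
  linarith [hgeom j, hJ j (by omega)]

theorem tendsto_div_rpow_of_le_mul_add {w u : ℕ → ℝ} {ρ γ : ℝ} (hw : ∀ k, 0 ≤ w k)
    (hρ0 : 0 ≤ ρ) (hρ1 : ρ < 1) (hrec : ∀ k, w (k + 1) ≤ ρ * w k + u (k + 1))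
    (hu : Tendsto (fun k : ℕ => u k / (k : ℝ) ^ γ) atTop (𝓝 0)) :
    Tendsto (fun k : ℕ => w k / (k : ℝ) ^ γ) atTop (𝓝 0) := by
  have hratio : Tendsto (fun k : ℕ => ρ * ((k : ℝ) / (k + 1)) ^ γ) atTop (𝓝 ρ) := by
    simpa using ((tendsto_natCast_div_add_atTop (1 : ℝ)).rpow_const
      (Or.inl one_ne_zero)).const_mul ρ
  refine tendsto_zero_of_eventually_le_mul_add (r := (1 + ρ) / 2)
    (fun k => div_nonneg (hw k) (by positivity)) (by linarith) (by linarith)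
    (hu.comp (tendsto_add_atTop_nat 1)) ?_
  filter_upwards [hratio.eventually_le_const (by linarith : ρ < (1 + ρ) / 2),
    eventually_gt_atTop 0] with k hk hkpos
  have hk' : (0 : ℝ) < k := Nat.cast_pos.2 hkpos
  have hsplit : (ρ * w k + u (k + 1)) / ((k + 1 : ℕ) : ℝ) ^ γ
      = ρ * ((k : ℝ) / (k + 1)) ^ γ * (w k / (k : ℝ) ^ γ) + u (k + 1) / ((k + 1 : ℕ) : ℝ) ^ γ := by
    rw [Real.div_rpow hk'.le (by positivity), Nat.cast_succ]
    field_simp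
  calc w (k + 1) / ((k + 1 : ℕ) : ℝ) ^ γ
      ≤ (ρ * w k + u (k + 1)) / ((k + 1 : ℕ) : ℝ) ^ γ := by gcongr; exact hrec k
    _ = _ := hsplit
    _ ≤ (1 + ρ) / 2 * (w k / (k : ℝ) ^ γ) + u (k + 1) / ((k + 1 : ℕ) : ℝ) ^ γ := by
      gcongr; exact div_nonneg (hw k) (by positivity)

theorem exists_norm_pow_le_of_spectralRadius_lt_one {A : Type*} [NormedRing A]
    [NormedAlgebra ℂ A] [CompleteSpace A] {a : A} (ha : spectralRadius ℂ a < 1) :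
    ∃ C ρ : ℝ, 0 ≤ ρ ∧ ρ < 1 ∧ ∀ j : ℕ, ‖a ^ j‖ ≤ C * ρ ^ j := by
  obtain ⟨r, hr, hr1⟩ := ENNReal.lt_iff_exists_nnreal_btwn.1 ha
  have hr0 : (0 : ℝ) < r := NNReal.coe_pos.2 (ENNReal.coe_pos.1 (pos_of_gt hr))
  have hgelfand := spectrum.pow_norm_pow_one_div_tendsto_nhds_spectralRadius a
  have hbound : ∀ᶠ j : ℕ in atTop, ‖a ^ j‖ ≤ (r : ℝ) ^ j := by
    filter_upwards [hgelfand.eventually_lt_const hr, eventually_gt_atTop 0] with j hj hj0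
    rw [ENNReal.ofReal_lt_coe_iff (by positivity), one_div,
      Real.rpow_inv_lt_iff_of_pos (norm_nonneg _) hr0.le (by positivity)] at hj
    exact_mod_cast hj.le
  have hO : (fun j : ℕ => ‖a ^ j‖) =O[cofinite] (fun j : ℕ => (r : ℝ) ^ j) :=
    Nat.cofinite_eq_atTop ▸ IsBigO.of_bound 1 (by simpa using hbound)
  obtain ⟨C, hC⟩ := (isBigO_cofinite_iff fun j h => absurd h (by positivity)).1 hO
  refine ⟨C, r, hr0.le, by exact_mod_cast hr1, fun j => ?_⟩
  simpa [abs_of_pos hr0] using hC j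

section LinftyOpNorm

attribute [local instance] Matrix.linftyOpNormedRing Matrix.linftyOpNormedAlgebra

theorem Matrix.exists_norm_pow_mulVec_le_of_spectrum_lt_one {ι : Type*} [Fintype ι]
    [DecidableEq ι] (M : Matrix ι ι ℝ)
    (hM : ∀ z ∈ spectrum ℂ (M.map Complex.ofReal), ‖z‖ < 1) :
    ∃ C ρ : ℝ, 0 ≤ ρ ∧ ρ < 1 ∧ ∀ (j : ℕ) (v : ι → ℝ), ‖M ^ j *ᵥ v‖ ≤ C * ρ ^ j * ‖v‖ := by
  rcases isEmpty_or_nonempty ι with hι | hι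
  · exact ⟨0, 0, le_rfl, zero_lt_one, fun j v => by simp [Subsingleton.elim (M ^ j *ᵥ v) 0]⟩
  have : CompleteSpace (Matrix ι ι ℂ) := FiniteDimensional.complete ℂ _
  obtain ⟨C, ρ, hρ0, hρ1, hpow⟩ := exists_norm_pow_le_of_spectralRadius_lt_one
    (spectrum.spectralRadius_lt_of_forall_lt (M.map Complex.ofReal) (r := 1)
      fun z hz => by simpa [← NNReal.coe_lt_coe] using hM z hz)
  refine ⟨C, ρ, hρ0, hρ1, fun j v => ?_⟩
  have hnorm : ‖M ^ j‖ = ‖M.map Complex.ofReal ^ j‖ := by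
    have hmap : M.map Complex.ofReal ^ j = (M ^ j).map Complex.ofReal :=
      (map_pow Complex.ofRealHom.mapMatrix M j).symm
    simp [hmap, linfty_opNorm_def]
  calc ‖M ^ j *ᵥ v‖ ≤ ‖M ^ j‖ * ‖v‖ := linfty_opNorm_mulVec _ _
    _ ≤ C * ρ ^ j * ‖v‖ := by gcongr; exact hnorm ▸ hpow j

end LinftyOpNorm

section LinearRecursion

variable {R E : Type*} [Semiring R] [NormedAddCommGroup E] [Module R E]
  {T : Module.End R E} {C ρ : ℝ} {s x : ℕ → E}

theorem norm_pow_apply_le_of_recursion (hT : ∀ (j : ℕ) (v : E), ‖(T ^ j) v‖ ≤ C * ρ ^ j * ‖v‖)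
    (hs : ∀ k, s (k + 1) = T (s k) + x (k + 1)) {w : ℕ → ℝ} (hw0 : w 0 = C * ‖s 0‖)
    (hw : ∀ k, w (k + 1) = ρ * w k + C * ‖x (k + 1)‖) (k j : ℕ) :
    ‖(T ^ j) (s k)‖ ≤ ρ ^ j * w k := by
  induction k generalizing j with
  | zero => rw [hw0]; linarith [hT j (s 0)]
  | succ k ih =>
    calc ‖(T ^ j) (s (k + 1))‖ = ‖(T ^ (j + 1)) (s k) + (T ^ j) (x (k + 1))‖ := by
          rw [hs, map_add, pow_succ, Module.End.mul_apply]
      _ ≤ ρ ^ (j + 1) * w k + C * ρ ^ j * ‖x (k + 1)‖ :=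
          (norm_add_le _ _).trans (add_le_add (ih (j + 1)) (hT j _))
      _ = ρ ^ j * w (k + 1) := by rw [hw]; ring

theorem tendsto_norm_div_rpow_of_recursion
    (hT : ∀ (j : ℕ) (v : E), ‖(T ^ j) v‖ ≤ C * ρ ^ j * ‖v‖) (hρ0 : 0 ≤ ρ) (hρ1 : ρ < 1)
    (hs : ∀ k, s (k + 1) = T (s k) + x (k + 1)) {γ : ℝ}
    (hx : Tendsto (fun k : ℕ => ‖x k‖ / (k : ℝ) ^ γ) atTop (𝓝 0)) :
    Tendsto (fun k : ℕ => ‖s k‖ / (k : ℝ) ^ γ) atTop (𝓝 0) := by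
  let w : ℕ → ℝ := fun k => Nat.rec (C * ‖s 0‖) (fun k wk => ρ * wk + C * ‖x (k + 1)‖) k
  have hsw : ∀ k, ‖s k‖ ≤ w k := fun k => by
    simpa using norm_pow_apply_le_of_recursion hT hs (w := w) rfl (fun _ => rfl) k 0
  have hw : Tendsto (fun k : ℕ => w k / (k : ℝ) ^ γ) atTop (𝓝 0) :=
    tendsto_div_rpow_of_le_mul_add (u := fun k => C * ‖x k‖)
      (fun k => (norm_nonneg _).trans (hsw k)) hρ0 hρ1 (fun _ => le_rfl)
      (by simpa only [mul_div_assoc, mul_zero] using hx.const_mul C)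
  exact squeeze_zero (fun k => by positivity)
    (fun k => div_le_div_of_nonneg_right (hsw k) (by positivity)) hw

end LinearRecursion

-- The entrywise sup norm of the statement; it must not be in scope together with the
-- `ℓ∞` operator norm above, which is a different `Norm` instance on square matrices.
attribute [local instance] Matrix.normedAddCommGroup

theorem Matrix.norm_vec {m n : Type*} [Fintype m] [Fintype n] (Y : Matrix m n ℝ) :
    ‖vec Y‖ = ‖Y‖ := by
  refine le_antisymm ((pi_norm_le_iff_of_nonneg (norm_nonneg _)).2 fun ij => ?_)
    ((norm_le_iff (norm_nonneg _)).2 fun i j => ?_)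
  · exact norm_entry_le_entrywise_sup_norm Y
  · exact norm_le_pi_norm (vec Y) (j, i)

theorem matrix_recursion_preserves_convergence_class_general
    {Ω' : Type*} [MeasurableSpace Ω'] (μ : Measure Ω')
    {m n : ℕ} (α : ℝ)
    (A : Matrix (Fin m) (Fin m) ℝ) (B : Matrix (Fin n) (Fin n) ℝ)
    (hstable : ∀ z ∈ spectrum ℂ ((Matrix.kroneckerMap (· * ·) Bᵀ A).map Complex.ofReal),
      ‖z‖ < 1)
    (X S : ℕ → Ω' → Matrix (Fin m) (Fin n) ℝ)
    (hSrec : ∀ k ω, S (k + 1) ω = A * S k ω * B + X (k + 1) ω)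
    (hX : ∀ ε > (0 : ℝ), ∀ᵐ ω ∂μ,
      Tendsto (fun k : ℕ => ‖X k ω‖ / (k : ℝ) ^ (α + ε)) atTop (nhds 0)) :
    ∀ ε > (0 : ℝ), ∀ᵐ ω ∂μ,
      Tendsto (fun k : ℕ => ‖S k ω‖ / (k : ℝ) ^ (α + ε)) atTop (nhds 0) := by
  obtain ⟨C, ρ, hρ0, hρ1, hpow⟩ := exists_norm_pow_mulVec_le_of_spectrum_lt_one _ hstable
  intro ε hε
  filter_upwards [hX ε hε] with ω hω
  have hvec : ∀ k, vec (S (k + 1) ω) = toLin' (Bᵀ ⊗ₖ A) (vec (S k ω)) + vec (X (k + 1) ω) := by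
    intro k
    rw [hSrec, vec_add, toLin'_apply, kronecker_mulVec_vec, transpose_transpose]
  have hvec_tendsto := tendsto_norm_div_rpow_of_recursion (T := toLin' (Bᵀ ⊗ₖ A))
    (s := fun k => vec (S k ω)) (x := fun k => vec (X k ω))
    (fun j v => by simpa only [← toLin'_pow, toLin'_apply] using hpow j v) hρ0 hρ1 hvec
    (by simpa only [norm_vec] using hω)
  simpa only [norm_vec] using hvec_tendsto

/-- If `S_k = A S_{k-1} B + X_k` with `S_{-1} = 0`, `Bᵀ ⊗ A` strictly stable, and
`X_k ∈ C(α)` (i.e. `‖X_k‖/k^{α+ε} → 0` a.s. for all `ε > 0`), then `S_k ∈ C(α)`. -/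
theorem matrix_recursion_preserves_convergence_class
    {Ω' : Type*} [MeasurableSpace Ω'] (μ : Measure Ω') [IsProbabilityMeasure μ]
    {m n : ℕ} (α : ℝ)
    (A : Matrix (Fin m) (Fin m) ℝ) (B : Matrix (Fin n) (Fin n) ℝ)
    (hstable : ∀ z ∈ spectrum ℂ ((Matrix.kroneckerMap (· * ·) Bᵀ A).map Complex.ofReal),
      ‖z‖ < 1)
    (X S : ℕ → Ω' → Matrix (Fin m) (Fin n) ℝ)
    (hS0 : ∀ ω, S 0 ω = X 0 ω)
    (hSrec : ∀ k ω, S (k + 1) ω = A * S k ω * B + X (k + 1) ω)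
    (hX : ∀ ε > (0 : ℝ), ∀ᵐ ω ∂μ,
      Tendsto (fun k : ℕ => ‖X k ω‖ / (k : ℝ) ^ (α + ε)) atTop (nhds 0)) :
    ∀ ε > (0 : ℝ), ∀ᵐ ω ∂μ,
      Tendsto (fun k : ℕ => ‖S k ω‖ / (k : ℝ) ^ (α + ε)) atTop (nhds 0) :=
  matrix_recursion_preserves_convergence_class_general μ α A B hstable X S hSrec hX
end
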